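/- Let θ : ℝⁿ → ℝ ∪ {+∞} be a polyhedral convex function and (x, v) ∈ gph ∂θ. Then the second subderivative of θ at x for v equals the indicator function of the critical cone: d²θ(x, v)(w) = δ_{C_θ(x,v)}(w) for all w ∈ ℝⁿ, where C_θ(x, v) = {w : ⟨v, w⟩ = dθ(x)(w)}. -/

import Mathlib

/- STATEMENT 4: for a polyhedral convex function θ and (x,v) ∈ gph ∂θ, the
second subderivative equals the indicator of the critical cone:
d²θ(x,v) = δ_{C_θ(x,v)}. -/

open scoped RealInnerProductSpace
open Filter Topology Classical
open scoped Pointwise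

noncomputable section

variable {n : ℕ}

def Subdiff (f : EuclideanSpace ℝ (Fin n) → EReal) (x : EuclideanSpace ℝ (Fin n)) :
    Set (EuclideanSpace ℝ (Fin n)) :=
  {v | ∀ y, f x + ((⟪v, y - x⟫ : ℝ) : EReal) ≤ f y}

def ProperFn (f : EuclideanSpace ℝ (Fin n) → EReal) : Prop :=
  (∀ x, f x ≠ ⊥) ∧ ∃ x, f x ≠ ⊤

/-- Epigraph of an extended-real-valued function. -/
def Epigraph {α : Type*} (f : α → EReal) : Set (α × ℝ) :=
  {p | f p.1 ≤ (p.2 : EReal)}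

/-- A polyhedral function: its epigraph is a finite intersection of halfspaces. -/
def IsPolyhedralFn (f : EuclideanSpace ℝ (Fin n) → EReal) : Prop :=
  ∃ (m : ℕ) (A : Fin m → EuclideanSpace ℝ (Fin n)) (a b : Fin m → ℝ),
    Epigraph f = {p | ∀ i, ⟪A i, p.1⟫ + a i * p.2 ≤ b i}

/-- First subderivative df(x)(w) = liminf_{t↓0, w'→w} [f(x+tw') − f(x)]/t. -/
def SubderivAt (f : EuclideanSpace ℝ (Fin n) → EReal) (x w : EuclideanSpace ℝ (Fin n)) :
    EReal :=
  Filter.liminf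
    (fun q : ℝ × EuclideanSpace ℝ (Fin n) =>
      (((1 / q.1 : ℝ)) : EReal) * (f (x + q.1 • q.2) - f x))
    ((𝓝[>] (0 : ℝ)) ×ˢ 𝓝 w)

/-- Second subderivative d²f(x,v)(w). -/
def Sub2At (f : EuclideanSpace ℝ (Fin n) → EReal) (x v w : EuclideanSpace ℝ (Fin n)) :
    EReal :=
  Filter.liminf
    (fun q : ℝ × EuclideanSpace ℝ (Fin n) =>
      (((2 / q.1 ^ 2 : ℝ)) : EReal) *
        (f (x + q.1 • q.2) - f x - ((q.1 * ⟪v, q.2⟫ : ℝ) : EReal)))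
    ((𝓝[>] (0 : ℝ)) ×ˢ 𝓝 w)

/-- Critical cone C_f(x,v) = {w : ⟨v,w⟩ = df(x)(w)}. -/
def CritCone (f : EuclideanSpace ℝ (Fin n) → EReal) (x v : EuclideanSpace ℝ (Fin n)) :
    Set (EuclideanSpace ℝ (Fin n)) :=
  {w | ((⟪v, w⟫ : ℝ) : EReal) = SubderivAt f x w}

/-- Extended-real-valued indicator function of a set. -/
def indicatorE {α : Type*} (S : Set α) : α → EReal := fun x => if x ∈ S then 0 else ⊤

/-!
Near `(x, θ x)` the epigraph of a polyhedral function agrees with a cone (only the constraints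
active at `(x, θ x)` matter), so `θ (x + t • u) - θ x = t * g u` for small `t > 0` and `u` near
`w`, with `g ≥ ⟪v, ·⟫` by the subgradient inequality. Hence `dθ(x)(w) = liminf_{u → w} g u`,
while the second-order quotient is `(2 / t) * (g u - ⟪v, u⟫)`: its liminf is `0` when the gap
`g - ⟪v, ·⟫` has liminf `0` at `w`, i.e. when `w` is critical, and `⊤` otherwise.
-/

open Set

section Halfspaces

variable {E : Type*} [NormedAddCommGroup E] [InnerProductSpace ℝ E]

lemma halfspace_locally_conic {A : E} {a b : ℝ} (ha : a ≤ 0) {x : E} {r : ℝ}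
    (hx : ⟪A, x⟫ + a * r ≤ b) :
    ∀ᶠ ε in 𝓝[>] (0 : ℝ), ∀ (u : E) (s : ℝ), ‖u‖ ≤ ε → -ε ≤ s → ∀ t ∈ Ioc (0 : ℝ) 1,
      (⟪A, x + t • u⟫ + a * (r + t * s) ≤ b ↔ ⟪A, x + u⟫ + a * (r + s) ≤ b) := by
  rcases hx.eq_or_lt with hact | hslack
  · refine Eventually.of_forall fun ε u s _ _ t ht => ?_
    have hexp : ∀ t : ℝ, ⟪A, x + t • u⟫ + a * (r + t * s) = b + t * (⟪A, u⟫ + a * s) := by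
      intro t
      rw [inner_add_right, inner_smul_right, ← hact]
      ring
    have hexp1 := hexp 1
    rw [one_smul, one_mul, one_mul] at hexp1
    rw [hexp t, hexp1, add_le_iff_nonpos_right, add_le_iff_nonpos_right]
    constructor <;> intro h <;> nlinarith [ht.1]
  · have hsmall : ∀ᶠ ε in 𝓝 (0 : ℝ), ε * (‖A‖ + |a|) < b - (⟪A, x⟫ + a * r) :=
      (continuous_id.mul continuous_const).tendsto' 0 0 (zero_mul _) |>.eventually
        (gt_mem_nhds (sub_pos.2 hslack))
    filter_upwards [nhdsWithin_le_nhds hsmall, self_mem_nhdsWithin] with ε hε hε0 u s hu hs t ht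
    have hfeas : ∀ (u : E) (s : ℝ), ‖u‖ ≤ ε → -ε ≤ s → ⟪A, x + u⟫ + a * (r + s) ≤ b := by
      intro u s hu hs
      have hAu : ⟪A, u⟫ ≤ ‖A‖ * ε :=
        (real_inner_le_norm A u).trans (mul_le_mul_of_nonneg_left hu (norm_nonneg A))
      have has : a * s ≤ |a| * ε := by
        rw [abs_of_nonpos ha]
        nlinarith
      rw [inner_add_right]
      nlinarith
    refine iff_of_true ?_ (hfeas u s hu hs)
    apply hfeas
    · rw [norm_smul, Real.norm_of_nonneg ht.1.le]
      nlinarith [norm_nonneg u, ht.2]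
    · nlinarith [mul_nonneg ht.1.le (neg_le_iff_add_nonneg.1 hs),
        mul_nonneg (mem_Ioi.1 hε0).le (sub_nonneg.2 ht.2)]

lemma coeff_nonpos_of_epigraph_eq {f : E → EReal} {m : ℕ} {A : Fin m → E} {a b : Fin m → ℝ}
    (hepi : Epigraph f = {p | ∀ i, ⟪A i, p.1⟫ + a i * p.2 ≤ b i}) {x : E} (hx : f x ≠ ⊤)
    (i : Fin m) : a i ≤ 0 := by
  obtain ⟨r, hr⟩ := EReal.exists_between_coe_real (Ne.lt_top hx) |>.imp fun r h => h.1.le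
  have hmem : ∀ s : ℝ, 0 ≤ s → ⟪A i, x⟫ + a i * (r + s) ≤ b i := fun s hs => by
    have : (x, r + s) ∈ Epigraph f := hr.trans (by exact_mod_cast le_add_of_nonneg_right hs)
    exact (hepi ▸ this) i
  by_contra! hpos
  have := hmem (|b i - ⟪A i, x⟫ - a i * r| / a i + 1) (by positivity)
  rw [mul_add, mul_add, mul_div_cancel₀ _ hpos.ne'] at this
  linarith [le_abs_self (b i - ⟪A i, x⟫ - a i * r)]

end Halfspaces

lemma EReal.eq_coe_mul_of_forall_le_iff {a b : EReal} {t : ℝ} (ht : 0 < t)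
    (h : ∀ s : ℝ, a ≤ ((t * s : ℝ) : EReal) ↔ b ≤ s) : a = t * b := by
  have hscale : ∀ z : ℝ, ((t * (z / t) : ℝ) : EReal) = z := fun z => by
    rw [mul_div_cancel₀ _ ht.ne']
  have hmono : Monotone fun c : EReal => (t : EReal) * c := fun c d hcd =>
    mul_le_mul_of_nonneg_left hcd (by exact_mod_cast ht.le)
  apply le_antisymm
  · refine EReal.le_of_forall_lt_iff_le.1 fun z hz => ?_
    have hb : b ≤ ((z / t : ℝ) : EReal) := by
      by_contra! hlt
      have := hmono hlt.le
      simp only [← EReal.coe_mul, hscale] at this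
      exact this.not_gt hz
    simpa only [hscale] using (h (z / t)).2 hb
  · refine EReal.le_of_forall_lt_iff_le.1 fun z hz => ?_
    have hb := (h (z / t)).1 (by rw [hscale]; exact hz.le)
    simpa only [← EReal.coe_mul, hscale] using hmono hb

lemma exists_eventually_smul_eq_of_locally_homogeneous {E : Type*} [NormedAddCommGroup E]
    [NormedSpace ℝ E] {φ : E → EReal} {ε : ℝ} (hε : 0 < ε)
    (hφ : ∀ u : E, ‖u‖ ≤ ε → ∀ t ∈ Ioc (0 : ℝ) 1, φ (t • u) = t * φ u) (w : E) :
    ∃ c > 0, ∀ᶠ q : ℝ × E in 𝓝[>] 0 ×ˢ 𝓝 w,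
      φ (q.1 • q.2) = q.1 * (((c⁻¹ : ℝ) : EReal) * φ (c • q.2)) := by
  set R := ‖w‖ + 1
  have hR : 0 < R := by positivity
  have hc : 0 < ε / R := div_pos hε hR
  refine ⟨ε / R, hc, ?_⟩
  have hu : ∀ᶠ u in 𝓝 w, ‖u‖ ≤ R := by
    filter_upwards [Metric.closedBall_mem_nhds w one_pos] with u hu
    have := norm_le_norm_add_norm_sub' u w
    rw [Metric.mem_closedBall, dist_eq_norm] at hu
    linarith
  have ht : ∀ᶠ t in 𝓝[>] (0 : ℝ), t ∈ Ioc 0 (ε / R) := Ioc_mem_nhdsGT hc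
  filter_upwards [ht.prod_mk hu] with q ⟨⟨ht0, htc⟩, hq⟩
  have hcu : ‖(ε / R) • q.2‖ ≤ ε := by
    rw [norm_smul, Real.norm_of_nonneg hc.le]
    calc ε / R * ‖q.2‖ ≤ ε / R * R := mul_le_mul_of_nonneg_left hq hc.le
      _ = ε := div_mul_cancel₀ _ hR.ne'
  have hscale : q.1 / (ε / R) ∈ Ioc (0 : ℝ) 1 := ⟨div_pos ht0 hc, (div_le_one hc).2 htc⟩
  calc φ (q.1 • q.2) = φ ((q.1 / (ε / R)) • (ε / R) • q.2) := by
        rw [smul_smul, div_mul_cancel₀ _ hc.ne']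
    _ = q.1 * (((ε / R)⁻¹ : ℝ) * φ ((ε / R) • q.2)) := by
        rw [hφ _ hcu _ hscale, ← mul_assoc, ← EReal.coe_mul, div_eq_mul_inv]

section Liminf

variable {X : Type*}

lemma eventually_fst_pos (l : Filter X) : ∀ᶠ q : ℝ × X in 𝓝[>] (0 : ℝ) ×ˢ l, 0 < q.1 :=
  tendsto_fst.eventually eventually_mem_nhdsWithin

lemma liminf_sub_coe_of_tendsto {F : Filter X} [F.NeBot] {g : X → EReal} {ℓ : X → ℝ} {c : ℝ}
    (hℓ : Tendsto ℓ F (𝓝 c)) :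
    liminf (fun u => g u - ℓ u) F = liminf g F - c := by
  set v : X → EReal := fun u => ((-ℓ u : ℝ) : EReal)
  have hv : Tendsto v F (𝓝 ((-c : ℝ) : EReal)) :=
    (continuous_coe_real_ereal.tendsto _).comp hℓ.neg
  have hfun : (fun u => g u - ℓ u) = g + v := funext fun u => by simp [v, sub_eq_add_neg]
  rw [hfun, sub_eq_add_neg, ← EReal.coe_neg]
  apply le_antisymm
  · calc liminf (g + v) F = liminf (v + g) F := by rw [add_comm]
      _ ≤ limsup v F + liminf g F :=
        EReal.liminf_add_le (by simp [hv.limsup_eq]) (by simp [hv.limsup_eq])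
      _ = liminf g F + ((-c : ℝ) : EReal) := by rw [hv.limsup_eq, add_comm]
  · calc liminf g F + ((-c : ℝ) : EReal) = liminf g F + liminf v F := by rw [hv.liminf_eq]
      _ ≤ liminf (g + v) F := EReal.le_liminf_add

lemma liminf_div_mul_eq_zero {F : Filter X} {h : X → EReal} (h0 : ∀ u, 0 ≤ h u)
    (hF : liminf h F = 0) {κ : ℝ} (hκ : 0 < κ) :
    liminf (fun q : ℝ × X => ((κ / q.1 : ℝ) : EReal) * h q.2) (𝓝[>] 0 ×ˢ F) = 0 := by
  apply le_antisymm
  · refine EReal.le_of_forall_lt_iff_le.1 fun δ hδ => liminf_le_of_frequently_le' ?_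
    have hδ : (0 : ℝ) < δ := by exact_mod_cast hδ
    rw [frequently_iff]
    intro S hS
    obtain ⟨T, hT, U, hU, hTU⟩ := mem_prod_iff.1 hS
    obtain ⟨t, htT, ht : 0 < t⟩ :=
      Filter.nonempty_of_mem (inter_mem hT (self_mem_nhdsWithin : Ioi (0 : ℝ) ∈ 𝓝[>] 0))
    have hsmall : ∃ᶠ u in F, h u < ((t * δ / κ : ℝ) : EReal) :=
      frequently_lt_of_liminf_lt (by isBoundedDefault)
        (by rw [hF]; exact_mod_cast (by positivity))
    obtain ⟨u, hu, huU⟩ := (hsmall.and_eventually hU).exists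
    refine ⟨(t, u), hTU ⟨htT, huU⟩, ?_⟩
    calc ((κ / t : ℝ) : EReal) * h u ≤ ((κ / t : ℝ) : EReal) * ((t * δ / κ : ℝ) : EReal) :=
          mul_le_mul_of_nonneg_left hu.le (by exact_mod_cast (by positivity))
      _ = δ := by rw [← EReal.coe_mul]; congr 1; field_simp
  · refine le_liminf_of_le (by isBoundedDefault) ((eventually_fst_pos F).mono fun q hq => ?_)
    exact mul_nonneg (by exact_mod_cast (div_pos hκ hq).le) (h0 q.2)

lemma liminf_div_mul_eq_top {F : Filter X} {h : X → EReal} (hF : 0 < liminf h F) {κ : ℝ}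
    (hκ : 0 < κ) :
    liminf (fun q : ℝ × X => ((κ / q.1 : ℝ) : EReal) * h q.2) (𝓝[>] 0 ×ˢ F) = ⊤ := by
  obtain ⟨η, hη0, hη⟩ := EReal.exists_between_coe_real hF
  have hη0 : (0 : ℝ) < η := by exact_mod_cast hη0
  refine (EReal.eq_top_iff_forall_lt _).2 fun M => ?_
  set N := |M| + 1
  have hN : 0 < N := by positivity
  refine (EReal.coe_lt_coe_iff.2 ((le_abs_self M).trans_lt (lt_add_one _))).trans_le
    (le_liminf_of_le (by isBoundedDefault) ?_)
  have ht : ∀ᶠ t in 𝓝[>] (0 : ℝ), t ∈ Ioo 0 (κ * η / N) := Ioo_mem_nhdsGT (by positivity)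
  filter_upwards [ht.prod_mk (eventually_lt_of_lt_liminf hη)] with q ⟨⟨ht0, htN⟩, hu⟩
  calc (N : EReal) ≤ ((κ / q.1 : ℝ) : EReal) * η := by
        rw [← EReal.coe_mul]
        refine EReal.coe_le_coe_iff.2 ?_
        rw [div_mul_eq_mul_div, le_div_iff₀ ht0]
        rw [lt_div_iff₀ hN] at htN
        linarith
    _ ≤ ((κ / q.1 : ℝ) : EReal) * h q.2 :=
        mul_le_mul_of_nonneg_left hu.le (by exact_mod_cast (div_pos hκ ht0).le)

end Liminf

section Polyhedral

variable {θ : EuclideanSpace ℝ (Fin n) → EReal} {x v : EuclideanSpace ℝ (Fin n)} {r : ℝ}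

lemma ProperFn.ne_top_of_mem_subdiff (hθ : ProperFn θ) (hv : v ∈ Subdiff θ x) : θ x ≠ ⊤ := by
  intro h
  obtain ⟨y, hy⟩ := hθ.2
  have := hv y
  rw [h, EReal.top_add_coe, top_le_iff] at this
  exact hy this

lemma inner_le_sub_of_mem_subdiff (hv : v ∈ Subdiff θ x) (hx : θ x = r)
    (u : EuclideanSpace ℝ (Fin n)) : ((⟪v, u⟫ : ℝ) : EReal) ≤ θ (x + u) - θ x := by
  have := hv (x + u)
  rw [add_sub_cancel_left, add_comm, hx] at this
  rw [hx]
  exact (EReal.le_sub_iff_add_le (.inl (EReal.coe_ne_bot r)) (.inl (EReal.coe_ne_top r))).2 this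

lemma IsPolyhedralFn.locally_conic (hθ : IsPolyhedralFn θ) (hx : θ x = r) :
    ∃ ε > 0, ∀ (u : EuclideanSpace ℝ (Fin n)) (s : ℝ), ‖u‖ ≤ ε → -ε ≤ s →
      ∀ t ∈ Ioc (0 : ℝ) 1,
        (θ (x + t • u) ≤ ((r + t * s : ℝ) : EReal) ↔ θ (x + u) ≤ ((r + s : ℝ) : EReal)) := by
  obtain ⟨m, A, a, b, hepi⟩ := hθ
  have hmem : ∀ y (s : ℝ), θ y ≤ s ↔ ∀ i, ⟪A i, y⟫ + a i * s ≤ b i := fun y s =>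
    Set.ext_iff.1 hepi (y, s)
  have hcone := eventually_all.2 fun i =>
    halfspace_locally_conic (coeff_nonpos_of_epigraph_eq hepi (hx ▸ EReal.coe_ne_top r) i)
      ((hmem x r).1 hx.le i)
  obtain ⟨ε, hε, hε0⟩ := (hcone.and self_mem_nhdsWithin).exists
  refine ⟨ε, hε0, fun u s hu hs t ht => ?_⟩
  simp only [hmem]
  exact forall_congr' fun i => hε i u s hu hs t ht

lemma IsPolyhedralFn.locally_homogeneous (hθ : IsPolyhedralFn θ) (hv : v ∈ Subdiff θ x)
    (hx : θ x = r) :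
    ∃ ε > 0, ∀ u : EuclideanSpace ℝ (Fin n), ‖u‖ ≤ ε → ∀ t ∈ Ioc (0 : ℝ) 1,
      θ (x + t • u) - θ x = t * (θ (x + u) - θ x) := by
  obtain ⟨ε, hε, hcone⟩ := hθ.locally_conic hx
  have hv1 : 0 < ‖v‖ + 1 := by positivity
  refine ⟨ε / (‖v‖ + 1), by positivity, fun u hu t ht =>
    EReal.eq_coe_mul_of_forall_le_iff ht.1 fun s => ?_⟩
  have hsub : ∀ y (s : ℝ), θ y - θ x ≤ s ↔ θ y ≤ ((r + s : ℝ) : EReal) := fun y s => by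
    rw [hx, EReal.sub_le_iff_le_add (.inl (EReal.coe_ne_bot r)) (.inl (EReal.coe_ne_top r)),
      add_comm, EReal.coe_add]
  rw [hsub, hsub]
  by_cases hs : ⟪v, u⟫ ≤ s
  · have hvu : ‖v‖ * ‖u‖ ≤ ε := calc
      ‖v‖ * ‖u‖ ≤ (‖v‖ + 1) * (ε / (‖v‖ + 1)) :=
        mul_le_mul (by linarith) hu (norm_nonneg u) hv1.le
      _ = ε := mul_div_cancel₀ _ hv1.ne'
    refine hcone u s (hu.trans (div_le_self hε.le (by linarith [norm_nonneg v]))) ?_ t ht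
    linarith [(abs_le.1 (abs_real_inner_le_norm v u)).1]
  · -- both sides fail by the subgradient inequality
    have hlow : ∀ t : ℝ, 0 < t → ¬ θ (x + t • u) ≤ ((r + t * s : ℝ) : EReal) := by
      intro t ht hle
      have := (inner_le_sub_of_mem_subdiff hv hx (t • u)).trans ((hsub _ _).2 hle)
      rw [real_inner_smul_right, EReal.coe_le_coe_iff] at this
      exact hs (le_of_mul_le_mul_left this ht)
    exact iff_of_false (hlow t ht.1) (by simpa using hlow 1 one_pos)

end Polyhedral

section SecondOrder

variable {θ : EuclideanSpace ℝ (Fin n) → EReal} {x w : EuclideanSpace ℝ (Fin n)}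
  {g : EuclideanSpace ℝ (Fin n) → EReal}

lemma subderivAt_eq_liminf
    (hg : ∀ᶠ q : ℝ × EuclideanSpace ℝ (Fin n) in 𝓝[>] 0 ×ˢ 𝓝 w,
      θ (x + q.1 • q.2) - θ x = q.1 * g q.2) :
    SubderivAt θ x w = liminf g (𝓝 w) := by
  unfold SubderivAt
  calc _ = liminf (g ∘ Prod.snd) (𝓝[>] (0 : ℝ) ×ˢ 𝓝 w) := by
        refine liminf_congr ?_
        filter_upwards [hg, eventually_fst_pos _] with q hq hq0
        rw [hq, ← mul_assoc, ← EReal.coe_mul, one_div_mul_cancel hq0.ne', EReal.coe_one, one_mul]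
        rfl
    _ = liminf g (𝓝 w) := by rw [liminf_comp, map_snd_prod]

lemma sub2At_eq_liminf (v : EuclideanSpace ℝ (Fin n))
    (hg : ∀ᶠ q : ℝ × EuclideanSpace ℝ (Fin n) in 𝓝[>] 0 ×ˢ 𝓝 w,
      θ (x + q.1 • q.2) - θ x = q.1 * g q.2) :
    Sub2At θ x v w = liminf (fun q : ℝ × EuclideanSpace ℝ (Fin n) =>
      ((2 / q.1 : ℝ) : EReal) * (g q.2 - ((⟪v, q.2⟫ : ℝ) : EReal))) (𝓝[>] 0 ×ˢ 𝓝 w) := by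
  refine liminf_congr ?_
  filter_upwards [hg, eventually_fst_pos _] with q hq hq0
  rw [hq, EReal.coe_mul q.1,
    ← EReal.mul_sub_of_nonneg_of_ne_top (by exact_mod_cast hq0.le) (EReal.coe_ne_top _),
    ← mul_assoc, ← EReal.coe_mul]
  congr 2
  field_simp

end SecondOrder

theorem statement4 {n : ℕ} (θ : EuclideanSpace ℝ (Fin n) → EReal)
    (hpoly : IsPolyhedralFn θ) (hproper : ProperFn θ)
    (x v : EuclideanSpace ℝ (Fin n)) (hv : v ∈ Subdiff θ x) :
    ∀ w, Sub2At θ x v w = indicatorE (CritCone θ x v) w := by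
  intro w
  obtain ⟨r, hr⟩ : ∃ r : ℝ, θ x = r :=
    ⟨_, (EReal.coe_toReal (hproper.ne_top_of_mem_subdiff hv) (hproper.1 x)).symm⟩
  obtain ⟨ε, hε, hhom⟩ := hpoly.locally_homogeneous hv hr
  obtain ⟨c, hc, hrep⟩ := exists_eventually_smul_eq_of_locally_homogeneous
    (φ := fun u => θ (x + u) - θ x) hε hhom w
  set g := fun u => ((c⁻¹ : ℝ) : EReal) * (θ (x + c • u) - θ x)
  have hgap : ∀ u, 0 ≤ g u - ((⟪v, u⟫ : ℝ) : EReal) := fun u => by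
    have := mul_le_mul_of_nonneg_left (inner_le_sub_of_mem_subdiff hv hr (c • u))
      (by exact_mod_cast (inv_pos.2 hc).le : (0 : EReal) ≤ ((c⁻¹ : ℝ) : EReal))
    rw [← EReal.coe_mul, real_inner_smul_right, inv_mul_cancel_left₀ hc.ne'] at this
    exact EReal.sub_nonneg (.inr (EReal.coe_ne_top _)) (.inr (EReal.coe_ne_bot _)) |>.2 this
  have hcrit : w ∈ CritCone θ x v ↔
      liminf (fun u => g u - ((⟪v, u⟫ : ℝ) : EReal)) (𝓝 w) = 0 := by
    have hℓ : Tendsto (fun u => ⟪v, u⟫) (𝓝 w) (𝓝 ⟪v, w⟫) :=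
      (continuous_const.inner continuous_id).tendsto w
    rw [CritCone, mem_ofPred_eq, subderivAt_eq_liminf (g := g) hrep,
      liminf_sub_coe_of_tendsto hℓ]
    exact ⟨fun h => by rw [← h, ← EReal.coe_sub, sub_self, EReal.coe_zero],
      fun h => by rw [← EReal.sub_add_cancel (a := liminf g (𝓝 w)), h, zero_add]⟩
  rw [sub2At_eq_liminf (g := g) v hrep, indicatorE]
  split_ifs with hw
  · exact liminf_div_mul_eq_zero hgap (hcrit.1 hw) two_pos
  · exact liminf_div_mul_eq_top ((le_liminf_of_le (by isBoundedDefault)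
      (Eventually.of_forall hgap)).lt_of_ne (Ne.symm (hcrit.not.1 hw))) two_pos

end
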